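/- Let G be a stopping rotor graph, let (ρ,σ) be a rotor-particle configuration, and let (ρ_1,σ_1) ∈ routing^∞(ρ,σ). Then a rotor-particle configuration (ρ_2,σ_2) belongs to routing^∞(ρ,σ) if and only if ρ_1 ∼ ρ_2 and σ_1 = σ_2. -/

import Mathlib

/-- A (stopping) rotor graph: a finite directed multigraph together with a
rotor order `rotor : A → A` acting on each out-arc fiber `A⁺(u)` as a single
cycle, such that from every vertex there is a directed path to a sink. -/
structure RotorGraph where
  V : Type
  A : Type
  [instFintypeV : Fintype V]
  [instFintypeA : Fintype A]
  [instDecEqV : DecidableEq V]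
  [instDecEqA : DecidableEq A]
  head : A → V
  tail : A → V
  rotor : A → A
  rotor_tail : ∀ a, tail (rotor a) = tail a
  rotor_cycle : ∀ a b : A, tail a = tail b → ∃ k : ℕ, rotor^[k] a = b
  stopping : ∀ v : V, ∃ (m : ℕ) (p : ℕ → V), p 0 = v ∧ (¬∃ a, tail a = p m) ∧
    ∀ i < m, ∃ a, tail a = p i ∧ head a = p (i + 1)

attribute [instance] RotorGraph.instFintypeV RotorGraph.instFintypeA
  RotorGraph.instDecEqV RotorGraph.instDecEqA

namespace RotorGraph

variable (G : RotorGraph)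

/-- The set `V₀` of non-sink vertices (positive outdegree). -/
def V0 : Set G.V := {v | ∃ a, G.tail a = v}

/-- A rotor configuration: a choice `ρ(u) ∈ A⁺(u)` for every `u ∈ V₀`. -/
def RotorConfig := {ρ : ↥G.V0 → G.A // ∀ v : ↥G.V0, G.tail (ρ v) = v.val}

/-- The routing step `routing⁺_u`: move a particle from `u` along `ρ(u)` and
turn the rotor at `u`. -/
def RoutingStep (p q : G.RotorConfig × (G.V → ℤ)) : Prop :=
  ∃ u : ↥G.V0,
    (∀ w : ↥G.V0, q.1.val w = if w = u then G.rotor (p.1.val u) else p.1.val w) ∧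
    (∀ v : G.V, q.2 v =
      p.2 v - (if v = u.val then 1 else 0) + (if v = G.head (p.1.val u) then 1 else 0))

/-- Equivalence of rotor-particle configurations: a finite sequence of
operators `routing⁺_u` and `routing⁻_u`. -/
def RPEquiv : (G.RotorConfig × (G.V → ℤ)) → (G.RotorConfig × (G.V → ℤ)) → Prop :=
  Relation.ReflTransGen (fun p q => G.RoutingStep p q ∨ G.RoutingStep q p)

/-- Equivalence of rotor configurations: `ρ ∼ ρ'` iff `(ρ,σ) ∼ (ρ',σ)` for some
(equivalently, every) particle configuration `σ`. -/
def RotorEquiv (ρ ρ' : G.RotorConfig) : Prop :=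
  ∃ σ : G.V → ℤ, G.RPEquiv (ρ, σ) (ρ', σ)

/-- `C` is (the vertex set of) a directed circuit of the functional graph
`G(ρ)`. -/
def IsCircuit (ρ : G.RotorConfig) (C : Set ↥G.V0) : Prop :=
  ∃ m : ℕ, 0 < m ∧ ∃ f : ZMod m → ↥G.V0, Function.Injective f ∧ Set.range f = C ∧
    ∀ i : ZMod m, G.head (ρ.val (f i)) = (f (i + 1)).val

/-- Positive cycle push: turn the rotor at every vertex of a directed circuit
of `G(ρ)`.  (A negative cycle push from `ρ` to `ρ'` is exactly a positive cycle
push from `ρ'` to `ρ`.) -/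
def PosCyclePush (ρ ρ' : G.RotorConfig) : Prop :=
  ∃ C : Set ↥G.V0, G.IsCircuit ρ C ∧
    (∀ u ∈ C, ρ'.val u = G.rotor (ρ.val u)) ∧ (∀ u ∉ C, ρ'.val u = ρ.val u)

/-- A finite sequence of positive and negative cycle pushes. -/
def CyclePushSeq : G.RotorConfig → G.RotorConfig → Prop :=
  Relation.ReflTransGen (fun a b => G.PosCyclePush a b ∨ G.PosCyclePush b a)

/-- `routing^∞(ρ,σ)`: all rotor-particle configurations equivalent to `(ρ,σ)`
with no particles left on `V₀`. -/
def RoutingInfty (p : G.RotorConfig × (G.V → ℤ)) : Set (G.RotorConfig × (G.V → ℤ)) :=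
  {q | G.RPEquiv p q ∧ ∀ u : ↥G.V0, q.2 u.val = 0}

end RotorGraph

/-! Every configuration equivalent to `p` is `fire p n` for a net firing vector `n : V₀ → ℤ`: the
rotor at `u` is turned `n u` times and the particles it sends move accordingly. If neither `p` nor
`fire p n` has particles on `V₀`, every vertex of `V₀` receives exactly what it fires, and double
counting over `{u | 0 < n u}` and `{u | n u < 0}` shows that no particle reaches or leaves a sink.
Conversely, routing commutes with adding particles, so `ρ₁ ∼ ρ₂` gives `(ρ₁, σ₁) ∼ (ρ₂, σ₁)`. -/

section Balanced

open Finset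

variable {ι β : Type*} [Fintype ι] [Fintype β] {e : ι → β} {send : ι → β → ℤ} {n : ι → ℤ}

/-- Double counting over the nodes `u` with `0 < n u`: they receive all that they send, hence
send nothing outside themselves. -/
theorem send_eq_zero_of_balanced_of_pos (he : e.Injective) (hsum : ∀ u, ∑ v, send u v = n u)
    (hnonneg : ∀ u v, 0 ≤ n u → 0 ≤ send u v) (hnonpos : ∀ u v, n u ≤ 0 → send u v ≤ 0)
    (hbal : ∀ w, ∑ u, send u (e w) = n w) {u : ι} (hu : 0 < n u) {v : β}
    (hv : v ∉ Set.range e) : send u v = 0 := by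
  classical
  set P := univ.filter fun u => 0 < n u
  have hsend_nonneg : ∀ u ∈ P, ∀ v, 0 ≤ send u v :=
    fun u hu v => hnonneg u v (mem_filter.1 hu).2.le
  have hsplit : ∀ u, n u = ∑ w ∈ P, send u (e w) + ∑ v ∈ (P.image e)ᶜ, send u v := fun u => by
    rw [← sum_image fun x _ y _ h => he h, sum_add_sum_compl, hsum]
  have hreceived : ∀ w ∈ P, n w ≤ ∑ u ∈ P, send u (e w) := fun w _ => by
    have hrest : ∑ u ∈ univ.filter (fun u => ¬0 < n u), send u (e w) ≤ 0 :=
      sum_nonpos fun u hu => hnonpos u _ (not_lt.1 (mem_filter.1 hu).2)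
    rw [← hbal w, ← sum_filter_add_sum_filter_not univ fun u => 0 < n u]
    linarith
  have hout : ∑ u ∈ P, ∑ v ∈ (P.image e)ᶜ, send u v = 0 := by
    have htotal : ∑ u ∈ P, n u =
        ∑ u ∈ P, ∑ w ∈ P, send u (e w) + ∑ u ∈ P, ∑ v ∈ (P.image e)ᶜ, send u v := by
      rw [← sum_add_distrib]
      exact sum_congr rfl fun u _ => hsplit u
    have hle := sum_le_sum hreceived
    rw [sum_comm] at hle
    exact le_antisymm (by linarith)
      (sum_nonneg fun u hu => sum_nonneg fun v _ => hsend_nonneg u hu v)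
  have huP : u ∈ P := mem_filter.2 ⟨mem_univ u, hu⟩
  have hvP : v ∈ (P.image e)ᶜ := by
    simp only [mem_compl, mem_image, not_exists, not_and]
    exact fun x _ hx => hv ⟨x, hx⟩
  exact (sum_eq_zero_iff_of_nonneg fun v _ => hsend_nonneg u huP v).1
    ((sum_eq_zero_iff_of_nonneg fun u hu => sum_nonneg fun v _ => hsend_nonneg u hu v).1 hout u huP)
    v hvP

theorem send_eq_zero_of_balanced (he : e.Injective) (hsum : ∀ u, ∑ v, send u v = n u)
    (hnonneg : ∀ u v, 0 ≤ n u → 0 ≤ send u v) (hnonpos : ∀ u v, n u ≤ 0 → send u v ≤ 0)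
    (hbal : ∀ w, ∑ u, send u (e w) = n w) (u : ι) {v : β} (hv : v ∉ Set.range e) :
    send u v = 0 := by
  rcases lt_trichotomy (n u) 0 with hu | hu | hu
  · have := send_eq_zero_of_balanced_of_pos (send := -send) (n := -n) he
      (by simpa [sum_neg_distrib] using hsum)
      (fun u v hu => by simpa using hnonpos u v (by simpa using hu))
      (fun u v hu => by simpa using hnonneg u v (by simpa using hu))
      (by simpa [sum_neg_distrib] using hbal) (by simpa using hu) hv
    simpa using this
  · exact le_antisymm (hnonpos u v hu.le) (hnonneg u v hu.ge)
  · exact send_eq_zero_of_balanced_of_pos he hsum hnonneg hnonpos hbal hu hv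

end Balanced

namespace RotorGraph

variable (G : RotorGraph)

theorem rotor_surjective : Function.Surjective G.rotor := fun a => by
  obtain ⟨k, hk⟩ := G.rotor_cycle (G.rotor a) a (G.rotor_tail a)
  refine ⟨G.rotor^[k] a, ?_⟩
  rwa [← Function.iterate_succ_apply' G.rotor k a, Function.iterate_succ_apply]

noncomputable def rotorPerm : Equiv.Perm G.A :=
  Equiv.ofBijective G.rotor
    ⟨Finite.injective_iff_surjective.2 G.rotor_surjective, G.rotor_surjective⟩

@[simp]
theorem rotorPerm_apply (a : G.A) : G.rotorPerm a = G.rotor a := rfl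

@[simp]
theorem tail_rotorPerm_zpow (k : ℤ) (a : G.A) : G.tail ((G.rotorPerm ^ k) a) = G.tail a := by
  induction k using Int.induction_on with
  | zero => rfl
  | succ i ih => rw [add_comm, zpow_one_add, Equiv.Perm.mul_apply, rotorPerm_apply, rotor_tail, ih]
  | pred i ih =>
    rw [sub_eq_neg_add, zpow_add, zpow_neg_one, Equiv.Perm.mul_apply, ← ih]
    exact (G.rotor_tail _).symm.trans (congrArg G.tail (G.rotorPerm.apply_symm_apply _))

/-- The net particle distribution produced by firing the rotor `m` times from position `a`;
`m < 0` undoes `-m` earlier firings. -/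
noncomputable def flow (a : G.A) (m : ℤ) : G.V → ℤ :=
  ∑ i ∈ Finset.Ico 0 m, Pi.single (G.head ((G.rotorPerm ^ i) a)) 1 -
    ∑ i ∈ Finset.Ico m 0, Pi.single (G.head ((G.rotorPerm ^ i) a)) 1

@[simp]
theorem flow_zero (a : G.A) : G.flow a 0 = 0 := by simp [flow]

theorem flow_add_one (a : G.A) (m : ℤ) :
    G.flow a (m + 1) = G.flow a m + Pi.single (G.head ((G.rotorPerm ^ m) a)) 1 := by
  rcases le_or_gt 0 m with hm | hm
  · rw [flow, flow, ← Finset.insert_Ico_right_eq_Ico_add_one hm, Finset.sum_insert (by simp),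
      Finset.Ico_eq_empty_of_le (show (0 : ℤ) ≤ m + 1 by omega), Finset.Ico_eq_empty_of_le hm]
    abel
  · rw [flow, flow, ← Finset.insert_Ico_add_one_left_eq_Ico hm, Finset.sum_insert (by simp),
      Finset.Ico_eq_empty_of_le (show m + 1 ≤ 0 by omega), Finset.Ico_eq_empty_of_le hm.le]
    abel

theorem flow_sub_one (a : G.A) (m : ℤ) :
    G.flow a (m - 1) = G.flow a m - Pi.single (G.head ((G.rotorPerm ^ (m - 1)) a)) 1 := by
  rw [eq_sub_iff_add_eq, ← flow_add_one, sub_add_cancel]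

theorem sum_flow (a : G.A) (m : ℤ) : ∑ v, G.flow a m v = m := by
  induction m using Int.induction_on with
  | zero => simp
  | succ i ih => simp [flow_add_one, Finset.sum_add_distrib, ih]
  | pred i ih => simp [flow_sub_one, Finset.sum_sub_distrib, ih]

theorem flow_nonneg (a : G.A) {m : ℤ} (hm : 0 ≤ m) (v : G.V) : 0 ≤ G.flow a m v := by
  induction m, hm using Int.leInduction with
  | base => simp
  | succ m _ ih =>
    rw [flow_add_one, Pi.add_apply]
    exact add_nonneg ih (by rw [Pi.single_apply]; split <;> norm_num)

theorem flow_nonpos (a : G.A) {m : ℤ} (hm : m ≤ 0) (v : G.V) : G.flow a m v ≤ 0 := by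
  induction m, hm using Int.leInductionDown with
  | base => simp
  | pred m _ ih =>
    rw [flow_sub_one, Pi.sub_apply]
    exact sub_nonpos_of_le (ih.trans (by rw [Pi.single_apply]; split <;> norm_num))

noncomputable instance : Fintype G.V0 := Fintype.ofFinite _

theorem RotorConfig.ext {ρ ρ' : G.RotorConfig} (h : ∀ u, ρ.val u = ρ'.val u) : ρ = ρ' :=
  Subtype.ext (funext h)

/-- The configuration `routing⁺_u p`. -/
def route (u : G.V0) (p : G.RotorConfig × (G.V → ℤ)) : G.RotorConfig × (G.V → ℤ) :=
  (⟨Function.update p.1.val u (G.rotor (p.1.val u)), fun w => by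
      rcases eq_or_ne w u with rfl | hw
      · rw [Function.update_self, rotor_tail, p.1.2]
      · rw [Function.update_of_ne hw, p.1.2]⟩,
    p.2 - Pi.single u.val 1 + Pi.single (G.head (p.1.val u)) 1)

theorem RoutingStep.exists_eq_route {p q : G.RotorConfig × (G.V → ℤ)} (h : G.RoutingStep p q) :
    ∃ u, q = G.route u p := by
  obtain ⟨u, hρ, hσ⟩ := h
  refine ⟨u, Prod.ext (RotorConfig.ext G fun w => ?_) (funext fun v => ?_)⟩
  · simp [route, hρ w, Function.update_apply]
  · simp [route, hσ v, Pi.single_apply]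

theorem route_injective (u : G.V0) : Function.Injective (G.route u) := by
  intro p q h
  have hρ : ∀ w, Function.update p.1.val u (G.rotor (p.1.val u)) w =
      Function.update q.1.val u (G.rotor (q.1.val u)) w :=
    fun w => congrArg (fun r : G.RotorConfig => r.val w) (congrArg Prod.fst h)
  have hu : p.1.val u = q.1.val u := G.rotorPerm.injective (by simpa using hρ u)
  have hρ' : p.1 = q.1 := RotorConfig.ext G fun w => by
    rcases eq_or_ne w u with rfl | hw
    · exact hu
    · simpa [Function.update_of_ne hw] using hρ w
  refine Prod.ext hρ' ?_
  have hσ := congrArg Prod.snd h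
  simp only [route, hu] at hσ
  simpa using hσ

/-- The configuration reached from `p` when each `u ∈ V₀` fires `n u` times net. -/
noncomputable def fire (p : G.RotorConfig × (G.V → ℤ)) (n : G.V0 → ℤ) :
    G.RotorConfig × (G.V → ℤ) :=
  (⟨fun u => (G.rotorPerm ^ n u) (p.1.val u), fun u => by rw [tail_rotorPerm_zpow, p.1.2]⟩,
    p.2 + ∑ u, (G.flow (p.1.val u) (n u) - Pi.single u.val (n u)))

@[simp]
theorem fire_zero (p : G.RotorConfig × (G.V → ℤ)) : G.fire p 0 = p :=
  Prod.ext (RotorConfig.ext G fun u => by simp [fire]) (by simp [fire])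

theorem route_fire (u : G.V0) (p : G.RotorConfig × (G.V → ℤ)) (n : G.V0 → ℤ) :
    G.route u (G.fire p n) = G.fire p (n + Pi.single u 1) := by
  refine Prod.ext (RotorConfig.ext G fun w => ?_) ?_
  · rcases eq_or_ne w u with rfl | hw
    · simp only [route, fire, Function.update_self, Pi.add_apply, Pi.single_eq_same]
      rw [add_comm, zpow_one_add, Equiv.Perm.mul_apply, rotorPerm_apply]
    · simp [route, fire, hw]
  · have hterm : ∀ w, G.flow (p.1.val w) ((n + Pi.single u 1 : G.V0 → ℤ) w) -
          Pi.single w.val ((n + Pi.single u 1 : G.V0 → ℤ) w) =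
        G.flow (p.1.val w) (n w) - Pi.single w.val (n w) +
          (Pi.single u (Pi.single (G.head ((G.rotorPerm ^ n u) (p.1.val u))) 1 -
            Pi.single u.val 1) : G.V0 → G.V → ℤ) w := by
      intro w
      rcases eq_or_ne w u with rfl | hw
      · simp only [Pi.add_apply, Pi.single_eq_same, flow_add_one, Pi.single_add]
        abel
      · simp [hw]
    simp only [route, fire, hterm, Finset.sum_add_distrib, Fintype.sum_pi_single']
    abel

variable {G}

theorem RPEquiv.exists_eq_fire {p q : G.RotorConfig × (G.V → ℤ)} (h : G.RPEquiv p q) :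
    ∃ n, q = G.fire p n := by
  induction h with
  | refl => exact ⟨0, (G.fire_zero p).symm⟩
  | tail _ hstep ih =>
    obtain ⟨n, rfl⟩ := ih
    rcases hstep with hforward | hbackward
    · obtain ⟨u, rfl⟩ := hforward.exists_eq_route
      exact ⟨n + Pi.single u 1, G.route_fire u p n⟩
    · obtain ⟨u, hu⟩ := hbackward.exists_eq_route
      refine ⟨n - Pi.single u 1, G.route_injective u ?_⟩
      rw [← hu, route_fire, sub_add_cancel]

theorem fire_snd_eq_of_eq_zero_on_V0 {p : G.RotorConfig × (G.V → ℤ)} {n : G.V0 → ℤ}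
    (hp : ∀ u : G.V0, p.2 u = 0) (hq : ∀ u : G.V0, (G.fire p n).2 u = 0) :
    (G.fire p n).2 = p.2 := by
  have hfire : ∀ v, (G.fire p n).2 v =
      p.2 v + ∑ u, G.flow (p.1.val u) (n u) v -
        ∑ u : G.V0, (Pi.single u.val (n u) : G.V → ℤ) v := by
    intro v
    simp [fire, Finset.sum_apply, Finset.sum_sub_distrib, add_sub_assoc]
  have hbal : ∀ w : G.V0, ∑ u, G.flow (p.1.val u) (n u) w = n w := by
    intro w
    have hw := hq w
    simp only [hfire, hp w, Pi.single_apply, Subtype.val_inj, Finset.sum_ite_eq, Finset.mem_univ,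
      if_true] at hw
    linarith
  funext v
  by_cases hv : v ∈ G.V0
  · exact (hq ⟨v, hv⟩).trans (hp ⟨v, hv⟩).symm
  · have hsink : ∀ u : G.V0, G.flow (p.1.val u) (n u) v = 0 :=
      fun u => send_eq_zero_of_balanced Subtype.val_injective (fun _ => G.sum_flow _ _)
        (fun _ _ hu => G.flow_nonneg _ hu _) (fun _ _ hu => G.flow_nonpos _ hu _) hbal u
        (by simpa using hv)
    have hsingle : ∀ u : G.V0, (Pi.single u.val (n u) : G.V → ℤ) v = 0 :=
      fun u => Pi.single_eq_of_ne (fun h : v = u.val => hv (h ▸ u.2)) _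
    simp [hfire, hsink, hsingle]

theorem RPEquiv.snd_eq_of_eq_zero_on_V0 {p q : G.RotorConfig × (G.V → ℤ)} (h : G.RPEquiv p q)
    (hp : ∀ u : G.V0, p.2 u = 0) (hq : ∀ u : G.V0, q.2 u = 0) : p.2 = q.2 := by
  obtain ⟨n, rfl⟩ := h.exists_eq_fire
  exact (fire_snd_eq_of_eq_zero_on_V0 hp hq).symm

theorem RPEquiv.symm {p q : G.RotorConfig × (G.V → ℤ)} (h : G.RPEquiv p q) : G.RPEquiv q p :=
  Relation.ReflTransGen.mono (fun _ _ => Or.symm) _ _ (Relation.ReflTransGen.swap _ _ h)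

theorem RoutingStep.add_particles {p q : G.RotorConfig × (G.V → ℤ)} (h : G.RoutingStep p q)
    (δ : G.V → ℤ) : G.RoutingStep (p.1, p.2 + δ) (q.1, q.2 + δ) := by
  obtain ⟨u, hρ, hσ⟩ := h
  exact ⟨u, hρ, fun v => by simp only [Pi.add_apply, hσ v]; ring⟩

theorem RPEquiv.add_particles {p q : G.RotorConfig × (G.V → ℤ)} (h : G.RPEquiv p q)
    (δ : G.V → ℤ) : G.RPEquiv (p.1, p.2 + δ) (q.1, q.2 + δ) :=
  Relation.ReflTransGen.lift (p := fun a b => G.RoutingStep a b ∨ G.RoutingStep b a)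
    (fun r : G.RotorConfig × (G.V → ℤ) => (r.1, r.2 + δ))
    (fun _ _ (h : _ ∨ _) => h.imp (·.add_particles δ) (·.add_particles δ)) _ _ h

theorem RotorEquiv.rpEquiv {ρ ρ' : G.RotorConfig} (h : G.RotorEquiv ρ ρ') (σ : G.V → ℤ) :
    G.RPEquiv (ρ, σ) (ρ', σ) := by
  obtain ⟨τ, hτ⟩ := h
  simpa using hτ.add_particles (σ - τ)

end RotorGraph

/-- Let `G` be a stopping rotor graph, `(ρ,σ)` a rotor-particle
configuration, and `(ρ₁,σ₁) ∈ routing^∞(ρ,σ)`. Then `(ρ₂,σ₂) ∈ routing^∞(ρ,σ)`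
if and only if `ρ₁ ∼ ρ₂` and `σ₁ = σ₂`. -/
theorem mem_routingInfty_iff (G : RotorGraph)
    (ρ ρ₁ ρ₂ : G.RotorConfig) (σ σ₁ σ₂ : G.V → ℤ)
    (h₁ : (ρ₁, σ₁) ∈ G.RoutingInfty (ρ, σ)) :
    (ρ₂, σ₂) ∈ G.RoutingInfty (ρ, σ) ↔ (G.RotorEquiv ρ₁ ρ₂ ∧ σ₁ = σ₂) := by
  obtain ⟨h₁, hσ₁⟩ := h₁
  constructor
  · rintro ⟨h₂, hσ₂⟩
    have h₁₂ : G.RPEquiv (ρ₁, σ₁) (ρ₂, σ₂) := Relation.ReflTransGen.trans h₁.symm h₂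
    obtain rfl : σ₁ = σ₂ := h₁₂.snd_eq_of_eq_zero_on_V0 hσ₁ hσ₂
    exact ⟨⟨σ₁, h₁₂⟩, rfl⟩
  · rintro ⟨h₁₂, rfl⟩
    exact ⟨Relation.ReflTransGen.trans h₁ (h₁₂.rpEquiv σ₁), hσ₁⟩
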